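/- arXiv:1205.1119 — 5 statements merged into one kernel-verified Lean document; each statement's English description precedes it below -/
import Mathlib

section
/- Let ρ be a real n×n matrix and let S = (ρ + ρᵀ)/2 be its symmetric part. If ρ satisfies the optical constraint ρ ρᵀ = α S for some nonzero real number α, then the matrix 1 − (2/α) ρ is orthogonal. -/
/-!
Expanding, `(1 - cρ)(1 - cρᵀ) = 1 - c(ρ + ρᵀ) + c²ρρᵀ`, and the optical constraint turns
`c²ρρᵀ` into `c²(α/2)(ρ + ρᵀ)`, which for `c = 2/α` is exactly `c(ρ + ρᵀ)`.
-/

open Matrix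

theorem one_sub_smul_mul_one_sub_smul_eq_one {K A : Type*} [CommRing K] [Ring A] [Algebra K A]
    {a b : A} {c t : K} (h : a * b = t • (a + b)) (hc : c * c * t = c) :
    (1 - c • a) * (1 - c • b) = 1 := by
  have expand : (1 - c • a) * (1 - c • b) = 1 - c • (a + b) + (c * c) • (a * b) := by
    simp only [sub_mul, mul_sub, one_mul, mul_one, smul_mul_smul_comm, smul_add]
    abel
  rw [expand, h, smul_smul, hc, sub_add_cancel]

theorem two_div_mul_two_div_mul_div_two (α : ℝ) : 2 / α * (2 / α) * (α / 2) = 2 / α := by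
  rcases eq_or_ne α 0 with rfl | hα
  · simp
  · field_simp

theorem optical_constraint_orthogonal_general {n : ℕ} (ρ : Matrix (Fin n) (Fin n) ℝ) (α : ℝ)
    (S : Matrix (Fin n) (Fin n) ℝ) (hS : S = (2⁻¹ : ℝ) • (ρ + ρᵀ))
    (hOC : ρ * ρᵀ = α • S) :
    (1 - (2 / α) • ρ) * (1 - (2 / α) • ρ)ᵀ = 1 := by
  have hρ : ρ * ρᵀ = (α / 2) • (ρ + ρᵀ) := by
    rw [hOC, hS, smul_smul, div_eq_mul_inv]
  rw [transpose_sub, transpose_one, transpose_smul]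
  exact one_sub_smul_mul_one_sub_smul_eq_one hρ (two_div_mul_two_div_mul_div_two α)

theorem optical_constraint_orthogonal {n : ℕ} (ρ : Matrix (Fin n) (Fin n) ℝ) (α : ℝ)
    (hα : α ≠ 0) (S : Matrix (Fin n) (Fin n) ℝ) (hS : S = (2⁻¹ : ℝ) • (ρ + ρᵀ))
    (hOC : ρ * ρᵀ = α • S) :
    (1 - (2 / α) • ρ) * (1 - (2 / α) • ρ)ᵀ = 1 :=
  optical_constraint_orthogonal_general ρ α S hS hOC
end

section
/- Let ρ be a real n×n matrix with symmetric part S = (ρ + ρᵀ)/2. If ρ ρᵀ = α S for some nonzero real α, then ρ also satisfies ρᵀ ρ = α S; in particular ρ commutes with its transpose, i.e. ρ is a normal matrix. -/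
/-!
Shifting by half the constant, `N = ρ - (α/2) • 1`, turns the constraint `ρ ρᵀ = (α/2)(ρ + ρᵀ)`
into `N Nᵀ = (α/2)² • 1`. Since `α ≠ 0`, `N` is a nonzero multiple of an orthogonal matrix, so also
`Nᵀ N = (α/2)² • 1`, and undoing the shift gives `ρᵀ ρ = (α/2)(ρ + ρᵀ)`.
-/

open Matrix

namespace Matrix

variable {m : Type*} [Fintype m] [DecidableEq m]

theorem mul_eq_smul_one_comm {K : Type*} [Field K] {A B : Matrix m m K} {c : K} (hc : c ≠ 0)
    (h : A * B = c • 1) : B * A = c • 1 := by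
  have hinv : (c⁻¹ • B) * A = 1 :=
    mul_eq_one_comm.mp (by rw [Matrix.mul_smul, h, smul_smul, inv_mul_cancel₀ hc, one_smul])
  rwa [smul_mul, inv_smul_eq_iff₀ hc] at hinv

theorem mul_transpose_eq_smul_add_iff {R : Type*} [CommRing R] (M : Matrix m m R) (t : R) :
    M * Mᵀ = t • (M + Mᵀ) ↔ (M - t • 1) * (M - t • 1)ᵀ = t ^ 2 • 1 := by
  have expand : (M - t • 1) * (M - t • 1)ᵀ = M * Mᵀ - t • (M + Mᵀ) + t ^ 2 • 1 := by
    simp only [transpose_sub, transpose_smul, transpose_one, sub_mul, mul_sub, smul_mul,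
      Matrix.mul_smul, one_mul, mul_one, smul_smul]
    module
  rw [expand, add_eq_right, sub_eq_zero]

theorem transpose_mul_eq_smul_add_of_mul_transpose {K : Type*} [Field K] {M : Matrix m m K}
    {t : K} (ht : t ≠ 0) (h : M * Mᵀ = t • (M + Mᵀ)) : Mᵀ * M = t • (M + Mᵀ) := by
  have hN := mul_eq_smul_one_comm (pow_ne_zero 2 ht) ((mul_transpose_eq_smul_add_iff M t).mp h)
  have hNT : (Mᵀ - t • 1) * (Mᵀ - t • 1)ᵀ = t ^ 2 • 1 := by
    simpa only [transpose_sub, transpose_smul, transpose_one, transpose_transpose] using hN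
  simpa only [transpose_transpose, add_comm Mᵀ M] using
    (mul_transpose_eq_smul_add_iff Mᵀ t).mpr hNT

end Matrix

theorem optical_constraint_normal {n : ℕ} (ρ : Matrix (Fin n) (Fin n) ℝ) (α : ℝ)
    (hα : α ≠ 0) (S : Matrix (Fin n) (Fin n) ℝ) (hS : S = (2⁻¹ : ℝ) • (ρ + ρᵀ))
    (hOC : ρ * ρᵀ = α • S) :
    ρᵀ * ρ = α • S ∧ ρ * ρᵀ = ρᵀ * ρ := by
  have hαS : α • S = (α / 2) • (ρ + ρᵀ) := by rw [hS, smul_smul, div_eq_mul_inv]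
  have hρ : ρᵀ * ρ = α • S :=
    hαS ▸ transpose_mul_eq_smul_add_of_mul_transpose (div_ne_zero hα two_ne_zero) (hαS ▸ hOC)
  exact ⟨hρ, hOC.trans hρ.symm⟩
end

section
/- Let s₂, s₃, s₄ be real numbers and suppose (p, q, r) ∈ ℝ³ is a nonzero solution of the four linear equations: (s₃−s₂−s₄)·q − (s₄−s₂−s₃)·r = 0, (s₂−s₄−s₃)·p − (s₄−s₂−s₃)·r = 0, (s₃²−s₂²−s₄²)·q − (s₄²−s₂²−s₃²)·r = 0, (s₂²−s₄²−s₃²)·p − (s₄²−s₂²−s₃²)·r = 0. Then s₂·(s₃−s₄)·(s₂−s₃−s₄)² = 0 and s₃·(s₂−s₄)·(s₂+s₄−s₃)² = 0. In particular, all nonvanishing elements of {s₂, s₃, s₄} are equal. -/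
/-!
Each of the two pairs of equations containing `r` is a `2 × 2` linear system, in `(q, r)` and in
`(p, r)` respectively, and the two are exchanged by swapping `s₂ ↔ s₃` and `p ↔ q`. If the unknowns
of the first system do not both vanish, its determinant `2 s₂ (s₃ - s₄) (s₂ - s₃ - s₄)` is zero;
if they do, then `p ≠ 0` and the remaining equation forces `s₂ - s₃ - s₄ = 0`. Either way
`s₂ (s₃ - s₄) (s₂ - s₃ - s₄) = 0`, and symmetrically `s₃ (s₂ - s₄) (s₃ - s₂ - s₄) = 0`.
A case analysis on these two products gives the equality of the nonvanishing `sᵢ`.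
-/

theorem mul_eq_mul_of_sub_eq_zero_of_ne_zero {R : Type*} [CommRing R] [NoZeroDivisors R]
    {a b c d x y : R} (h₁ : a * x - b * y = 0) (h₂ : c * x - d * y = 0) (hxy : x ≠ 0 ∨ y ≠ 0) :
    a * d = b * c := by
  have hx : (a * d - b * c) * x = 0 := by linear_combination d * h₁ - b * h₂
  have hy : (a * d - b * c) * y = 0 := by linear_combination c * h₁ - a * h₂
  rcases hxy with h | h
  · exact sub_eq_zero.mp ((mul_eq_zero.mp hx).resolve_right h)
  · exact sub_eq_zero.mp ((mul_eq_zero.mp hy).resolve_right h)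

theorem nontwisting_factor_eq_zero {x y z u v w : ℝ} (hne : v = 0 → w = 0 → u ≠ 0)
    (h₁ : (y - x - z) * v - (z - x - y) * w = 0)
    (h₂ : (x - z - y) * u - (z - x - y) * w = 0)
    (h₃ : (y ^ 2 - x ^ 2 - z ^ 2) * v - (z ^ 2 - x ^ 2 - y ^ 2) * w = 0) :
    x * (y - z) * (x - y - z) = 0 := by
  by_cases hvw : v = 0 ∧ w = 0
  · obtain ⟨rfl, rfl⟩ := hvw
    have hu := hne rfl rfl
    have hxyz : x - z - y = 0 := (mul_eq_zero.mp (by simpa using h₂)).resolve_right hu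
    linear_combination x * (y - z) * hxyz
  · have hdet := mul_eq_mul_of_sub_eq_zero_of_ne_zero h₁ h₃ (not_and_or.mp hvw)
    linear_combination -hdet / 2

theorem nontwisting_PhiA_zero_system (s₂ s₃ s₄ p q r : ℝ)
    (hpqr : (p, q, r) ≠ (0, 0, 0))
    (h1 : (s₃ - s₂ - s₄) * q - (s₄ - s₂ - s₃) * r = 0)
    (h2 : (s₂ - s₄ - s₃) * p - (s₄ - s₂ - s₃) * r = 0)
    (h3 : (s₃ ^ 2 - s₂ ^ 2 - s₄ ^ 2) * q - (s₄ ^ 2 - s₂ ^ 2 - s₃ ^ 2) * r = 0)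
    (h4 : (s₂ ^ 2 - s₄ ^ 2 - s₃ ^ 2) * p - (s₄ ^ 2 - s₂ ^ 2 - s₃ ^ 2) * r = 0) :
    s₂ * (s₃ - s₄) * (s₂ - s₃ - s₄) ^ 2 = 0 ∧
    s₃ * (s₂ - s₄) * (s₂ + s₄ - s₃) ^ 2 = 0 ∧
    ((s₂ ≠ 0 → s₃ ≠ 0 → s₂ = s₃) ∧ (s₂ ≠ 0 → s₄ ≠ 0 → s₂ = s₄) ∧
      (s₃ ≠ 0 → s₄ ≠ 0 → s₃ = s₄)) := by
  have e₂ : s₂ * (s₃ - s₄) * (s₂ - s₃ - s₄) = 0 :=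
    nontwisting_factor_eq_zero (u := p) (v := q) (w := r)
      (by rintro rfl rfl rfl; exact hpqr rfl) h1 h2 h3
  have e₃ : s₃ * (s₂ - s₄) * (s₃ - s₂ - s₄) = 0 :=
    nontwisting_factor_eq_zero (u := q) (v := p) (w := r)
      (by rintro rfl rfl rfl; exact hpqr rfl) (by linear_combination h2) (by linear_combination h1)
      (by linear_combination h4)
  refine ⟨by linear_combination (s₂ - s₃ - s₄) * e₂, by linear_combination (s₃ - s₂ - s₄) * e₃,
    ?_, ?_, ?_⟩ <;> intro hx hy <;> grind
end

section
/- Let s₂, s₃, s₄ be real numbers with s₂ ≠ 0, s₃ ≠ 0, and s₂ ≠ s₃, and define ρᵢ(r) = sᵢ/(1 + r·sᵢ). Then it is impossible that ρ₄(r)² = (ρ₂(r) − ρ₃(r))² holds for all r in some open interval containing 0 on which all denominators are nonzero. -/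
/-!
Since `a / (1 + r a) - b / (1 + r b) = (a - b) / ((1 + r a) (1 + r b))`, clearing denominators
turns the identity into the polynomial identity
`s₄² ((1 + r s₂) (1 + r s₃))² = (s₂ - s₃)² (1 + r s₄)²`, which, holding on a neighbourhood
of `0`, holds for every `r`. At `r = -1/s₂` the left side vanishes, forcing `s₄ = s₂`;
likewise `s₄ = s₃`.
-/

open Filter Polynomial Topology

theorem Polynomial.eq_of_eventually_eval_eq {R : Type*} [CommRing R] [IsDomain R]
    [TopologicalSpace R] [T1Space R] {p q : R[X]} (x : R) [(𝓝[≠] x).NeBot]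
    (h : ∀ᶠ y in 𝓝 x, p.eval y = q.eval y) : p = q :=
  eq_of_infinite_eval_eq p q (infinite_of_mem_nhds x h)

section

variable {a b c : ℝ}

lemma sq_mul_sq_eq_of_sq_div_eq {r : ℝ} (ha : 1 + r * a ≠ 0) (hb : 1 + r * b ≠ 0)
    (hc : 1 + r * c ≠ 0)
    (h : (c / (1 + r * c)) ^ 2 = (a / (1 + r * a) - b / (1 + r * b)) ^ 2) :
    c ^ 2 * ((1 + r * a) * (1 + r * b)) ^ 2 = (a - b) ^ 2 * (1 + r * c) ^ 2 := by
  rw [div_sub_div _ _ ha hb, div_pow, div_pow,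
    div_eq_div_iff (pow_ne_zero _ hc) (pow_ne_zero _ (mul_ne_zero ha hb))] at h
  linear_combination h

lemma forall_sq_mul_sq_eq_of_eventually {x : ℝ}
    (h : ∀ᶠ r in 𝓝 x, c ^ 2 * ((1 + r * a) * (1 + r * b)) ^ 2 = (a - b) ^ 2 * (1 + r * c) ^ 2)
    (r : ℝ) : c ^ 2 * ((1 + r * a) * (1 + r * b)) ^ 2 = (a - b) ^ 2 * (1 + r * c) ^ 2 := by
  have hpoly : C (c ^ 2) * ((1 + X * C a) * (1 + X * C b)) ^ 2
      = C ((a - b) ^ 2) * (1 + X * C c) ^ 2 :=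
    eq_of_eventually_eval_eq x <| by
      simpa only [eval_mul, eval_add, eval_pow, eval_one, eval_X, eval_C] using h
  simpa only [eval_mul, eval_add, eval_pow, eval_one, eval_X, eval_C] using congrArg (eval r) hpoly

lemma eq_of_forall_sq_mul_sq_eq (ha : a ≠ 0) (hab : a ≠ b)
    (h : ∀ r, c ^ 2 * ((1 + r * a) * (1 + r * b)) ^ 2 = (a - b) ^ 2 * (1 + r * c) ^ 2) :
    c = a := by
  have hpole : 1 + -a⁻¹ * a = 0 := by rw [neg_mul, inv_mul_cancel₀ ha, add_neg_cancel]
  have hzero : (a - b) ^ 2 * (1 + -a⁻¹ * c) ^ 2 = 0 := by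
    rw [← h, hpole]
    ring
  have hc : 1 + -a⁻¹ * c = 0 := by simpa [sub_ne_zero.mpr hab] using hzero
  field_simp at hc
  linarith

end

theorem no_distinct_nonzero_eigenvalues (s₂ s₃ s₄ : ℝ)
    (h₂ : s₂ ≠ 0) (h₃ : s₃ ≠ 0) (hne : s₂ ≠ s₃) :
    ¬ ∃ I : Set ℝ, IsOpen I ∧ 0 ∈ I ∧
      (∀ r ∈ I, 1 + r * s₂ ≠ 0 ∧ 1 + r * s₃ ≠ 0 ∧ 1 + r * s₄ ≠ 0) ∧
      (∀ r ∈ I, (s₄ / (1 + r * s₄)) ^ 2 =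
        (s₂ / (1 + r * s₂) - s₃ / (1 + r * s₃)) ^ 2) := by
  rintro ⟨I, hIo, h0, hden, heq⟩
  have hpoly := forall_sq_mul_sq_eq_of_eventually (x := 0) <| by
    filter_upwards [hIo.mem_nhds h0] with r hr
    obtain ⟨d₂, d₃, d₄⟩ := hden r hr
    exact sq_mul_sq_eq_of_sq_div_eq d₂ d₃ d₄ (heq r hr)
  have e₂ : s₄ = s₂ := eq_of_forall_sq_mul_sq_eq h₂ hne hpoly
  have e₃ : s₄ = s₃ :=
    eq_of_forall_sq_mul_sq_eq h₃ hne.symm fun r => by linear_combination hpoly r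
  exact hne (e₂.symm.trans e₃)
end

section
/- Let s₂ ≠ 0 and A ≠ 0 be real numbers, set s₄ = (s₂² + A²)/s₂, and let ρ be the 3×3 matrix with symmetric part S = diag(s₂, s₂, s₄) and antisymmetric part having only nonzero components A₂₃ = A = −A₃₂. Let Φᵢⱼ be the 3×3 matrix with symmetric part diag(Φˢ₂₂, Φˢ₂₂, Φˢ₄₄) and antisymmetric part with only nonzero components Φᴬ₂₃ = −Φᴬ₃₂, where Φˢ₂₂ = ((s₂² − A²)/(s₂² + A²))·Φˢ₄₄ and Φᴬ₂₃ = (2 A s₂/(s₂² + A²))·Φˢ₄₄. Then ρ and Φᵢⱼ commute: [ρ, Φ] = 0, and ρ satisfies the optical constraint ρ ρᵀ = s₄ · S. -/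
/-!
Write `J = !![0, 1; -1, 0]`, so `J² = -1`. Both ρ and Φ have the shape `(a + b J) ⊕ c` with respect
to the splitting `ℝ³ = ℝ² ⊕ ℝ`, and such matrices form a commutative algebra (isomorphic to `ℂ × ℝ`);
hence ρ and Φ commute. Transposition sends `J` to `-J`, so
`ρ ρᵀ = (s₂² + A²) ⊕ s₄²`, which is `s₄ S` exactly because `s₂ s₄ = s₂² + A²`.
-/

open Matrix

namespace Matrix

variable {R : Type*} [CommRing R]

def rotDiag (a b c : R) : Matrix (Fin 3) (Fin 3) R :=
  !![a, b, 0; -b, a, 0; 0, 0, c]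

theorem rotDiag_mul_rotDiag (a b c a' b' c' : R) :
    rotDiag a b c * rotDiag a' b' c' = rotDiag (a * a' - b * b') (a * b' + b * a') (c * c') := by
  simp only [rotDiag, mul_fin_three]
  ring_nf

theorem rotDiag_mul_comm (a b c a' b' c' : R) :
    rotDiag a b c * rotDiag a' b' c' = rotDiag a' b' c' * rotDiag a b c := by
  rw [rotDiag_mul_rotDiag, rotDiag_mul_rotDiag]
  congr 1 <;> ring

theorem transpose_rotDiag (a b c : R) : (rotDiag a b c)ᵀ = rotDiag a (-b) c := by
  ext i j
  fin_cases i <;> fin_cases j <;> simp [rotDiag]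

theorem smul_rotDiag (r a b c : R) : r • rotDiag a b c = rotDiag (r * a) (r * b) (r * c) := by
  simp [rotDiag]

theorem diag_add_antisymm_eq_rotDiag (a b c : R) :
    !![a, 0, 0; 0, a, 0; 0, 0, c] + !![0, b, 0; -b, 0, 0; 0, 0, 0] = rotDiag a b c := by
  simp [rotDiag]

theorem rotDiag_zero (a c : R) : rotDiag a 0 c = !![a, 0, 0; 0, a, 0; 0, 0, c] := by
  simp [rotDiag]

end Matrix

theorem case_i_commute_and_optical_general (s₂ A : ℝ) (hs : s₂ ≠ 0)
    (s₄ : ℝ) (hs₄ : s₄ = (s₂ ^ 2 + A ^ 2) / s₂)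
    (Φs₂₂ Φs₄₄ Φa₂₃ : ℝ)
    (ρ Φ S : Matrix (Fin 3) (Fin 3) ℝ)
    (hS : S = !![s₂, 0, 0; 0, s₂, 0; 0, 0, s₄])
    (hρ : ρ = S + !![0, A, 0; -A, 0, 0; 0, 0, 0])
    (hΦ : Φ = !![Φs₂₂, 0, 0; 0, Φs₂₂, 0; 0, 0, Φs₄₄] +
              !![0, Φa₂₃, 0; -Φa₂₃, 0, 0; 0, 0, 0]) :
    ρ * Φ = Φ * ρ ∧ ρ * ρᵀ = s₄ • S := by
  rw [hS] at hρ
  rw [diag_add_antisymm_eq_rotDiag] at hρ hΦ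
  have hs₂s₄ : s₂ * s₄ = s₂ ^ 2 + A ^ 2 := by
    rw [hs₄]
    field_simp
  refine ⟨by rw [hρ, hΦ, rotDiag_mul_comm], ?_⟩
  rw [hρ, hS, transpose_rotDiag, rotDiag_mul_rotDiag, ← rotDiag_zero, smul_rotDiag]
  congr 1
  · linear_combination -hs₂s₄
  · ring

theorem case_i_commute_and_optical (s₂ A : ℝ) (hs : s₂ ≠ 0) (hA : A ≠ 0)
    (s₄ : ℝ) (hs₄ : s₄ = (s₂ ^ 2 + A ^ 2) / s₂)
    (Φs₂₂ Φs₄₄ Φa₂₃ : ℝ)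
    (h22 : Φs₂₂ = ((s₂ ^ 2 - A ^ 2) / (s₂ ^ 2 + A ^ 2)) * Φs₄₄)
    (h23 : Φa₂₃ = (2 * A * s₂ / (s₂ ^ 2 + A ^ 2)) * Φs₄₄)
    (ρ Φ S : Matrix (Fin 3) (Fin 3) ℝ)
    (hS : S = !![s₂, 0, 0; 0, s₂, 0; 0, 0, s₄])
    (hρ : ρ = S + !![0, A, 0; -A, 0, 0; 0, 0, 0])
    (hΦ : Φ = !![Φs₂₂, 0, 0; 0, Φs₂₂, 0; 0, 0, Φs₄₄] +
              !![0, Φa₂₃, 0; -Φa₂₃, 0, 0; 0, 0, 0]) :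
    ρ * Φ = Φ * ρ ∧ ρ * ρᵀ = s₄ • S :=
  case_i_commute_and_optical_general s₂ A hs s₄ hs₄ Φs₂₂ Φs₄₄ Φa₂₃ ρ Φ S hS hρ hΦ
end
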